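/- For natural numbers m ≤ n, 3·∑_{s=m}^{n} K₃(s) = K₃(n+2) + 2·K₃(n) + K₃(m) − K₃(m+2), where K₃ is the Modified third-order Jacobsthal sequence. -/
import Mathlib


def K3 : ℕ → ℤ
  | 0 => 3
  | 1 => 1
  | 2 => 3
  | n + 3 => K3 (n + 2) + K3 (n + 1) + 2 * K3 n

theorem stmt18 : ∀ m n : ℕ, m ≤ n →
    3 * ∑ s ∈ Finset.Icc m n, K3 s =
      K3 (n + 2) + 2 * K3 n + K3 m - K3 (m + 2) := by
  intro m n h
  induction n, h using Nat.le_induction with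
  | base => simp; ring
  | succ n hn ih =>
    rw [Finset.sum_Icc_succ_top (by omega), mul_add, ih,
      show n + 1 + 2 = n + 3 from rfl, show K3 (n + 3) = K3 (n + 2) + K3 (n + 1) + 2 * K3 n from rfl]
    ring
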